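/- A fibration p : E → B has the weakly unique path homotopically lifting property (wuphl) if and only if every loop in each fiber of p is nullhomotopic in E, i.e., every loop γ : [0,1] → E with p ∘ γ constant is homotopic relative to {0,1} to the constant loop at γ(0). -/

import Mathlib

universe u

open scoped unitInterval

/-- `p` has the weakly unique path homotopically lifting property (wuphl). -/
def Wuphl {E B : Type*} [TopologicalSpace E] [TopologicalSpace B] (p : C(E, B)) : Prop :=
  ∀ α β : C(unitInterval, E), α 0 = β 0 → α 1 = β 1 →
    (p.comp α).HomotopicRel (p.comp β) {0, 1} →
    α.HomotopicRel β {0, 1}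

/-- `p` is a (Hurewicz) fibration: it has the homotopy lifting property with respect to
every topological space. -/
def IsFibration {E B : Type*} [TopologicalSpace E] [TopologicalSpace B] (p : C(E, B)) : Prop :=
  ∀ (X : Type u) [TopologicalSpace X] (f : C(X, E)) (F : C(X × unitInterval, B)),
    (∀ x, F (x, 0) = p (f x)) →
    ∃ F' : C(X × unitInterval, E), (∀ z, p (F' z) = F z) ∧ (∀ x, F' (x, 0) = f x)

/-!
Two paths with the same endpoints are homotopic iff the loop `α · β⁻¹` is nullhomotopic, so
wuphl amounts to: a loop whose image under `p` is nullhomotopic is itself nullhomotopic. Lifting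
such a nullhomotopy of `p ∘ γ` gives a square in `E` with bottom edge `γ` whose three other edges
lie in the fibre over `p (γ 0)`; hence `γ` is homotopic to a loop in that fibre, which is
nullhomotopic by assumption. Conversely, a loop in a fibre has the same image under `p` as the
constant loop.
-/

universe v

open Set

namespace Path.Homotopic

variable {X : Type*} [TopologicalSpace X] {a b : X}

theorem trans_symm_homotopic_refl_iff {γ γ' : Path a b} :
    (γ.trans γ'.symm).Homotopic (Path.refl a) ↔ γ.Homotopic γ' := by
  rw [← Quotient.eq, ← Quotient.eq, Quotient.mk_trans, Quotient.mk_symm, Quotient.mk_refl]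
  constructor
  · intro h
    calc Quotient.mk γ = ((Quotient.mk γ).trans (Quotient.mk γ').symm).trans (Quotient.mk γ') := by
          simp
      _ = Quotient.mk γ' := by rw [h, Quotient.refl_trans]
  · intro h
    rw [h, Quotient.trans_symm]

theorem of_range_subset {S : Set X}
    (hS : ∀ (x : X) (γ : Path x x), range γ ⊆ S → γ.Homotopic (Path.refl x))
    {γ γ' : Path a b} (hγ : range γ ⊆ S) (hγ' : range γ' ⊆ S) : γ.Homotopic γ' :=
  trans_symm_homotopic_refl_iff.mp <| hS a _ <| by
    rw [trans_range, symm_range]; exact union_subset hγ hγ'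

theorem trans_evalAt_of_homotopy (γ : Path a b) {f : C(I, X)}
    (H : γ.toContinuousMap.Homotopy f) :
    (γ.trans ((H.evalAt 1).cast γ.target.symm rfl)).Homotopic
      (((H.evalAt 0).cast γ.source.symm rfl).trans (Path.id.map f.continuous)) := by
  convert (map_trans_evalAt H Path.id).pathCast γ.source.symm rfl using 2 <;> ext <;> rfl

end Path.Homotopic

theorem IsFibration.exists_homotopy_lift {E B : Type*} [TopologicalSpace E] [TopologicalSpace B]
    {p : C(E, B)} (hp : IsFibration.{max u v} p) {X : Type v} [TopologicalSpace X]
    {f₀ : C(X, E)} {g : C(X, B)} (H : (p.comp f₀).Homotopy g) :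
    ∃ (f₁ : C(X, E)) (H' : f₀.Homotopy f₁), ∀ z, p (H' z) = H z := by
  obtain ⟨F, hpF, hF₀⟩ := hp (ULift.{u} X) (f₀.comp ⟨ULift.down, continuous_uliftDown⟩)
    (H.toContinuousMap.comp ⟨fun z => (z.2, z.1.down), by fun_prop⟩) fun x => H.apply_zero x.down
  let F' : C(I × X, E) := F.comp ⟨fun z => (ULift.up z.2, z.1), by fun_prop⟩
  exact ⟨F'.comp ⟨fun x => (1, x), by fun_prop⟩, ⟨F', fun x => hF₀ _, fun _ => rfl⟩,
    fun z => hpF _⟩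

theorem IsFibration.homotopic_of_map_homotopic {E B : Type*} [TopologicalSpace E]
    [TopologicalSpace B] {p : C(E, B)} (hp : IsFibration p)
    (hfib : ∀ (y : B) (x : E) (γ : Path x x), range γ ⊆ p ⁻¹' {y} → γ.Homotopic (Path.refl x))
    {a b : E} {γ γ' : Path a b} (hγ' : range γ' ⊆ p ⁻¹' {p a})
    (h : (γ.map p.continuous).Homotopic (γ'.map p.continuous)) : γ.Homotopic γ' := by
  obtain ⟨K⟩ := h
  obtain ⟨f, H, hH⟩ := hp.exists_homotopy_lift K.toHomotopy
  have hb : p b = p a := hγ' γ'.target_mem_range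
  have hsquare := Path.Homotopic.trans_evalAt_of_homotopy γ H
  set left := (H.evalAt 0).cast γ.source.symm rfl
  set right := (H.evalAt 1).cast γ.target.symm rfl
  set top := Path.id.map f.continuous
  have hleft : range left ⊆ p ⁻¹' {p a} := by
    rintro _ ⟨t, rfl⟩
    exact (hH (t, 0)).trans (K.source t)
  have hright : range right ⊆ p ⁻¹' {p a} := by
    rintro _ ⟨t, rfl⟩
    exact (hH (t, 1)).trans ((K.target t).trans hb)
  have htop : range top ⊆ p ⁻¹' {p a} := by
    rintro _ ⟨t, rfl⟩
    calc p (top t) = p (H (1, t)) := by rw [H.apply_one]; rfl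
      _ = p (γ' t) := (hH _).trans (K.apply_one t)
      _ = p a := hγ' (mem_range_self t)
  have hvertical : γ'.Homotopic ((left.trans top).trans right.symm) :=
    Path.Homotopic.of_range_subset (hfib (p a)) hγ' (by
      simp only [Path.trans_range, Path.symm_range]
      exact union_subset (union_subset hleft htop) hright)
  have hγ : γ.Homotopic ((left.trans top).trans right.symm) := by
    rw [← Path.Homotopic.Quotient.eq] at hsquare ⊢
    simp only [Path.Homotopic.Quotient.mk_trans, Path.Homotopic.Quotient.mk_symm] at hsquare ⊢
    rw [← hsquare, Path.Homotopic.Quotient.trans_assoc, Path.Homotopic.Quotient.trans_symm,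
      Path.Homotopic.Quotient.trans_refl]
  exact hγ.trans hvertical.symm

theorem fibration_wuphl_iff_loops_in_fibers_nullhomotopic {E B : Type*} [TopologicalSpace E]
    [TopologicalSpace B] (p : C(E, B)) (hp : IsFibration p) :
    Wuphl p ↔
    (∀ γ : C(unitInterval, E), γ 0 = γ 1 → (∀ t, p (γ t) = p (γ 0)) →
      γ.HomotopicRel (ContinuousMap.const unitInterval (γ 0)) {0, 1}) := by
  constructor
  · intro hwuphl γ hloop hfiber
    refine hwuphl γ (.const I (γ 0)) rfl hloop.symm ?_
    rw [show p.comp γ = p.comp (.const I (γ 0)) from ContinuousMap.ext hfiber]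
    exact .refl _
  · intro hnull α β h₀ h₁ hαβ
    have hfib (y : B) (x : E) (γ : Path x x) (hγ : range γ ⊆ p ⁻¹' {y}) :
        γ.Homotopic (Path.refl x) := by
      obtain ⟨H⟩ := hnull γ.toContinuousMap (γ.source.trans γ.target.symm)
        fun t => (hγ ⟨t, rfl⟩).trans (hγ ⟨0, rfl⟩).symm
      exact ⟨H.cast rfl (by ext; exact γ.source)⟩
    let a : Path (α 0) (α 1) := ⟨α, rfl, rfl⟩
    let b : Path (α 0) (α 1) := ⟨β, h₀.symm, h₁.symm⟩
    have hab : ((a.trans b.symm).map p.continuous).Homotopic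
        ((Path.refl (α 0)).map p.continuous) := by
      rw [Path.map_trans, ← Path.map_symm]
      exact Path.Homotopic.trans_symm_homotopic_refl_iff.mpr hαβ
    exact Path.Homotopic.trans_symm_homotopic_refl_iff.mp
      (hp.homotopic_of_map_homotopic hfib (by simp) hab)
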